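/- arXiv:1710.11033 — 2 statements merged into one kernel-verified Lean document; each statement's English description precedes it below -/
import Mathlib

section
/- Let I = {i₁ < i₂ < … < i_ℓ} be a nonempty finite set of positive integers. Define I_k = ({i₁,…,i_{k−1}, i_k−1, i_{k+1}−1, …, i_ℓ−1}) \ {0} and Î_k = {i₁,…,i_{k−1}, i_{k+1}−1, …, i_ℓ−1}, and let I' = {i_k ∈ I : i_k − 1 ∉ I}, I'' = I' \ {1}. Then for n > max(I), d(I;n+1) = d(I;n) + Σ_{i_k ∈ I''} d(I_k;n) + Σ_{i_k ∈ I'} d(Î_k;n). -/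
/-!
Remove the largest letter `n + 1` from `π ∈ S_{n+1}`, leaving `σ ∈ S_n`. If it stood last,
`Des π = Des σ`. If it stood at position `j ≤ n`, then `π` descends at `j` but not at `j - 1`;
the descents of `σ` other than `j - 1` are those of `π` other than `j`, shifted down by one above
`j`; and whether `σ` descends at `j - 1` is unconstrained. So `Des π = I` forces `j ∈ I'` and
`Des σ ∈ {Î_j, Î_j ∪ {j - 1}}`, and `Î_j ∪ {j - 1} = I_j` when `j ≥ 2`, while for `j = 1` it
contains `0` and is realised by no permutation.
-/

/-- The descent set of a permutation of `Fin n`, with positions 1-indexed: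
`i ∈ descSet n π` iff `1 ≤ i ≤ n-1` and `π_i > π_{i+1}` (1-indexed entries). -/
def descSet (n : ℕ) (π : Equiv.Perm (Fin n)) : Finset ℕ :=
  (Finset.range n).filter fun i =>
    ∃ h : 0 < i ∧ i < n, π ⟨i, h.2⟩ < π ⟨i - 1, by omega⟩

/-- `dA I n` is the number of permutations in `S_n` with descent set exactly `I`. -/
def dA (I : Finset ℕ) (n : ℕ) : ℕ :=
  (Finset.univ.filter fun π : Equiv.Perm (Fin n) => descSet n π = I).card

open Equiv Finset

lemma Equiv.optionCongr_removeNone {α β : Type*} (e : Option α ≃ Option β) (h : e none = none) :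
    e.removeNone.optionCongr = e := by
  ext1 x
  cases x with
  | none => simp [h]
  | some a =>
    obtain ⟨b, hb⟩ := Option.ne_none_iff_exists'.mp fun ha => Option.some_ne_none a
      (e.injective (ha.trans h.symm))
    simpa using removeNone_some e ⟨b, hb⟩

section insertMax

variable {n : ℕ}

/-- The one-line word of `σ` with the new largest letter inserted at (0-indexed) position `p`. -/
def insertMax (p : Fin (n + 1)) (σ : Perm (Fin n)) : Perm (Fin (n + 1)) :=
  (finSuccEquiv' p).trans (σ.optionCongr.trans (finSuccEquiv' (Fin.last n)).symm)

@[simp]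
lemma insertMax_apply_self (p : Fin (n + 1)) (σ : Perm (Fin n)) :
    insertMax p σ p = Fin.last n := by
  simp [insertMax]

@[simp]
lemma insertMax_apply_succAbove (p : Fin (n + 1)) (σ : Perm (Fin n)) (k : Fin n) :
    insertMax p σ (p.succAbove k) = (σ k).castSucc := by
  simp [insertMax]

def insertMaxEquiv (n : ℕ) : Fin (n + 1) × Perm (Fin n) ≃ Perm (Fin (n + 1)) where
  toFun x := insertMax x.1 x.2
  invFun π := (π.symm (Fin.last n),
    removeNone ((finSuccEquiv' (π.symm (Fin.last n))).symm.trans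
      (π.trans (finSuccEquiv' (Fin.last n)))))
  left_inv := by
    rintro ⟨p, σ⟩
    have hp : (insertMax p σ).symm (Fin.last n) = p := by simp [symm_apply_eq]
    refine Prod.ext hp ?_
    dsimp only
    rw [hp]
    convert removeNone_optionCongr σ
    ext1 x
    simp [insertMax]
  right_inv π := by
    dsimp only
    rw [insertMax, optionCongr_removeNone _ (by simp)]
    ext1 x
    simp

lemma insertMax_apply_of_lt (p : Fin (n + 1)) (σ : Perm (Fin n)) {i : ℕ} (hi : i < n)
    (h : i < p) : insertMax p σ ⟨i, by omega⟩ = (σ ⟨i, hi⟩).castSucc := by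
  rw [← insertMax_apply_succAbove p σ, Fin.succAbove_of_castSucc_lt _ _ h]
  rfl

lemma insertMax_apply_of_gt (p : Fin (n + 1)) (σ : Perm (Fin n)) {i : ℕ} (hi : i < n + 1)
    (h : p < i) : insertMax p σ ⟨i, hi⟩ = (σ ⟨i - 1, by omega⟩).castSucc := by
  rw [← insertMax_apply_succAbove p σ,
    Fin.succAbove_of_le_castSucc _ _ (Fin.le_def.2 (by simp; omega))]
  congr
  omega

end insertMax

lemma mem_descSet {n : ℕ} {π : Perm (Fin n)} {i : ℕ} :
    i ∈ descSet n π ↔ ∃ h : 0 < i ∧ i < n, π ⟨i, h.2⟩ < π ⟨i - 1, by omega⟩ := by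
  simp only [descSet, mem_filter, mem_range, and_iff_right_iff_imp]
  exact fun ⟨h, _⟩ => h.2

lemma pos_and_lt_of_mem_descSet {n : ℕ} {π : Perm (Fin n)} {i : ℕ} (h : i ∈ descSet n π) :
    0 < i ∧ i < n :=
  (mem_descSet.mp h).1

lemma dA_eq_zero_of_zero_mem {I : Finset ℕ} (h : 0 ∈ I) (n : ℕ) : dA I n = 0 := by
  refine card_eq_zero.mpr (filter_eq_empty_iff.mpr fun σ _ hσ => ?_)
  exact (pos_and_lt_of_mem_descSet (hσ ▸ h)).1.false

lemma mem_descSet_insertMax {n : ℕ} (p : Fin (n + 1)) (σ : Perm (Fin n)) (i : ℕ) :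
    i ∈ descSet (n + 1) (insertMax p σ) ↔
      (i < p ∧ i ∈ descSet n σ) ∨ (i = p + 1 ∧ (p : ℕ) < n) ∨
        (p + 1 < i ∧ i - 1 ∈ descSet n σ) := by
  simp only [mem_descSet]
  rcases lt_trichotomy i p with h | rfl | h
  · constructor
    · rintro ⟨⟨h0, _⟩, hlt⟩
      have hi : i < n := by omega
      rw [insertMax_apply_of_lt p σ hi h, insertMax_apply_of_lt p σ (by omega) (by omega),
        Fin.castSucc_lt_castSucc_iff] at hlt
      exact Or.inl ⟨h, ⟨h0, hi⟩, hlt⟩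
    · rintro (⟨-, ⟨h0, hi⟩, hlt⟩ | ⟨rfl, -⟩ | ⟨h', -⟩)
      · refine ⟨⟨h0, by omega⟩, ?_⟩
        rwa [insertMax_apply_of_lt p σ hi h, insertMax_apply_of_lt p σ (by omega) (by omega),
          Fin.castSucc_lt_castSucc_iff]
      all_goals omega
  · refine iff_of_false ?_ (by rintro (⟨h, -⟩ | ⟨h, -⟩ | ⟨h, -⟩) <;> omega)
    rintro ⟨_, hlt⟩
    rw [Fin.eta, insertMax_apply_self] at hlt
    exact (Fin.le_last _).not_gt hlt
  · rcases (Nat.succ_le_of_lt h).eq_or_lt with rfl | h'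
    · constructor
      · rintro ⟨⟨_, hi⟩, _⟩
        exact Or.inr (Or.inl ⟨rfl, by omega⟩)
      · rintro (⟨h', -⟩ | ⟨-, hp⟩ | ⟨h', -⟩)
        rotate_left
        · refine ⟨⟨by omega, by omega⟩, ?_⟩
          have hprev : (⟨(p : ℕ).succ - 1, by omega⟩ : Fin (n + 1)) = p :=
            Fin.ext (Nat.succ_sub_one _)
          rw [insertMax_apply_of_gt p σ _ h, hprev, insertMax_apply_self]
          exact Fin.castSucc_lt_last _
        all_goals omega
    · constructor
      · rintro ⟨⟨h0, hi⟩, hlt⟩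
        rw [insertMax_apply_of_gt p σ hi h, insertMax_apply_of_gt p σ (by omega) (by omega),
          Fin.castSucc_lt_castSucc_iff] at hlt
        exact Or.inr (Or.inr ⟨h', ⟨by omega, by omega⟩, hlt⟩)
      · rintro (⟨h'', -⟩ | ⟨h'', -⟩ | ⟨-, ⟨h0, hi⟩, hlt⟩)
        rotate_left 2
        · refine ⟨⟨by omega, by omega⟩, ?_⟩
          rwa [insertMax_apply_of_gt p σ _ h, insertMax_apply_of_gt p σ (by omega) (by omega),
            Fin.castSucc_lt_castSucc_iff]
        all_goals omega

lemma descSet_insertMax_last {n : ℕ} (σ : Perm (Fin n)) :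
    descSet (n + 1) (insertMax (Fin.last n) σ) = descSet n σ := by
  ext i
  have hbound : ∀ k ∈ descSet n σ, 0 < k ∧ k < n := fun _ => pos_and_lt_of_mem_descSet
  rw [mem_descSet_insertMax, Fin.val_last]
  grind

/-- The paper's `Î_j`: delete `j` and shift the elements above it down by one. -/
def collapseAt (j : ℕ) (X : Finset ℕ) : Finset ℕ :=
  (X.erase j).image fun x => if x < j then x else x - 1

lemma mem_collapseAt {j m : ℕ} {X : Finset ℕ} :
    m ∈ collapseAt j X ↔ (m < j ∧ m ∈ X) ∨ (j ≤ m ∧ m + 1 ∈ X) := by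
  simp only [collapseAt, mem_image, mem_erase]
  constructor
  · rintro ⟨x, ⟨hxj, hx⟩, rfl⟩
    split_ifs with h
    · exact Or.inl ⟨h, hx⟩
    · exact Or.inr ⟨by omega, by rwa [Nat.sub_add_cancel (by omega)]⟩
  · rintro (⟨h, hm⟩ | ⟨h, hm⟩)
    · exact ⟨m, ⟨by omega, hm⟩, if_pos h⟩
    · exact ⟨m + 1, ⟨by omega, hm⟩, by simp; omega⟩

lemma image_erase_zero_eq_insert_collapseAt {I : Finset ℕ} (h0 : 0 ∉ I) {j : ℕ} (hj : j ∈ I)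
    (h2 : 2 ≤ j) :
    (I.image fun x => if x < j then x else x - 1).erase 0 = insert (j - 1) (collapseAt j I) := by
  have h0' : 0 ∉ collapseAt j I := by
    rw [mem_collapseAt]
    rintro (⟨-, h⟩ | ⟨h, -⟩)
    exacts [h0 h, by omega]
  conv_lhs => rw [← insert_erase hj, image_insert, if_neg (lt_irrefl j)]
  rw [erase_insert_of_ne (by omega), ← collapseAt, erase_eq_of_notMem h0']

lemma descSet_insertMax_eq_iff {n : ℕ} {p : Fin (n + 1)} (hp : (p : ℕ) < n)
    (σ : Perm (Fin n)) (I : Finset ℕ) :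
    descSet (n + 1) (insertMax p σ) = I ↔
      (p : ℕ) + 1 ∈ I ∧ (p : ℕ) ∉ I ∧ (descSet n σ).erase p = collapseAt (p + 1) I := by
  simp only [Finset.ext_iff, mem_descSet_insertMax, mem_erase, mem_collapseAt]
  grind

lemma card_filter_erase_eq {α : Type*} (s : Finset α) (f : α → Finset ℕ) {p : ℕ}
    {X : Finset ℕ} (hp : p ∉ X) :
    #{a ∈ s | (f a).erase p = X} = #{a ∈ s | f a = X} + #{a ∈ s | f a = insert p X} := by
  classical
  have hsplit : ∀ D : Finset ℕ, D.erase p = X ↔ D = X ∨ D = insert p X := by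
    intro D
    constructor
    · rintro rfl
      by_cases hD : p ∈ D
      · exact Or.inr (insert_erase hD).symm
      · exact Or.inl (erase_eq_of_notMem hD).symm
    · rintro (rfl | rfl)
      · exact erase_eq_of_notMem hp
      · exact erase_insert hp
  simp_rw [hsplit]
  rw [filter_or, card_union_of_disjoint]
  refine disjoint_filter.mpr fun a _ hX hpX => ?_
  exact hp (hX ▸ hpX ▸ mem_insert_self p X)

lemma card_descSet_insertMax_eq {n : ℕ} {p : Fin (n + 1)} (hp : (p : ℕ) < n) (I : Finset ℕ) :
    #{σ : Perm (Fin n) | descSet (n + 1) (insertMax p σ) = I} =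
      if (p : ℕ) + 1 ∈ I ∧ (p : ℕ) ∉ I then
        dA (collapseAt (p + 1) I) n + dA (insert (p : ℕ) (collapseAt (p + 1) I)) n
      else 0 := by
  simp_rw [descSet_insertMax_eq_iff hp]
  split_ifs with hI
  · simp only [hI, not_false_eq_true, true_and]
    refine card_filter_erase_eq _ _ fun h => ?_
    rcases mem_collapseAt.mp h with ⟨-, h⟩ | ⟨h, -⟩
    exacts [hI.2 h, by omega]
  · simpa using fun _ h1 h2 _ => hI ⟨h1, h2⟩

lemma dA_succ_eq_sum (I : Finset ℕ) (n : ℕ) :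
    dA I (n + 1) =
      ∑ p : Fin (n + 1), #{σ : Perm (Fin n) | descSet (n + 1) (insertMax p σ) = I} := by
  simp only [dA, card_filter]
  rw [← (insertMaxEquiv n).sum_comp, Fintype.sum_prod_type]
  rfl

lemma sum_filter_sub_one_notMem {M : Type*} [AddCommMonoid M] {I : Finset ℕ} {n : ℕ}
    (hI : ∀ j ∈ I, j ≤ n) (f : ℕ → M) :
    ∑ j ∈ I with j - 1 ∉ I, f j =
      ∑ p : Fin n, if (p : ℕ) + 1 ∈ I ∧ (p : ℕ) ∉ I then f (p + 1) else 0 := by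
  have hsub : {j ∈ I | j - 1 ∉ I} ⊆ range (n + 1) := fun j hj =>
    mem_range.mpr (Nat.lt_succ_of_le (hI j (mem_filter.mp hj).1))
  rw [Fin.sum_univ_eq_sum_range (fun p => if p + 1 ∈ I ∧ p ∉ I then f (p + 1) else 0),
    ← inter_eq_right.mpr hsub, ← sum_ite_mem, sum_range_succ']
  simp

lemma sum_dA_insert_pred_collapseAt {I S : Finset ℕ} (h0 : 0 ∉ I) (hS : S ⊆ I) (n : ℕ) :
    ∑ j ∈ S, dA (insert (j - 1) (collapseAt j I)) n =
      ∑ j ∈ S.erase 1, dA ((I.image fun x => if x < j then x else x - 1).erase 0) n := by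
  rw [← sum_erase _ (a := 1) (dA_eq_zero_of_zero_mem (mem_insert_self 0 _) n)]
  refine sum_congr rfl fun j hj => ?_
  have hjI : j ∈ I := hS (mem_of_mem_erase hj)
  have hj0 : j ≠ 0 := fun h => h0 (h ▸ hjI)
  have hj1 : j ≠ 1 := ne_of_mem_erase hj
  rw [image_erase_zero_eq_insert_collapseAt h0 hjI (by omega)]

theorem stmt_3_general (I : Finset ℕ) (h0 : 0 ∉ I)
    (n : ℕ) (hn : I.sup id < n) :
    dA I (n + 1) =
      dA I n
      + ∑ j ∈ ((I.filter fun j => j - 1 ∉ I).erase 1),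
          dA ((I.image fun x => if x < j then x else x - 1).erase 0) n
      + ∑ j ∈ (I.filter fun j => j - 1 ∉ I),
          dA ((I.erase j).image fun x => if x < j then x else x - 1) n := by
  have hI : ∀ j ∈ I, j ≤ n := fun j hj => ((le_sup (f := id) hj).trans_lt hn).le
  -- `p + 1 - 1` rather than `p`, to match the shape `f (p + 1)` of `sum_filter_sub_one_notMem`
  have hfiber (p : Fin n) :
      #{σ | descSet (n + 1) (insertMax p.castSucc σ) = I} =
        if (p : ℕ) + 1 ∈ I ∧ (p : ℕ) ∉ I then
          dA (collapseAt (p + 1) I) n + dA (insert ((p : ℕ) + 1 - 1) (collapseAt (p + 1) I)) n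
        else 0 := by
    simpa using card_descSet_insertMax_eq (p := p.castSucc) p.isLt I
  rw [dA_succ_eq_sum, Fin.sum_univ_castSucc]
  simp_rw [descSet_insertMax_last, hfiber]
  rw [← sum_filter_sub_one_notMem hI
      (fun j => dA (collapseAt j I) n + dA (insert (j - 1) (collapseAt j I)) n),
    sum_add_distrib, sum_dA_insert_pred_collapseAt h0 (filter_subset _ I)]
  change _ + _ + dA I n = _
  unfold collapseAt
  ring

/-- Theorem 2.4: the positive recursion
`d(I;n+1) = d(I;n) + Σ_{i_k ∈ I''} d(I_k;n) + Σ_{i_k ∈ I'} d(Î_k;n)`, where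
`I_k` keeps elements `< i_k`, decrements the rest and discards `0`;
`Î_k` removes `i_k` and decrements the elements `> i_k`;
`I' = {i_k ∈ I : i_k − 1 ∉ I}` and `I'' = I' \ {1}`. -/
theorem stmt_3 (I : Finset ℕ) (h0 : 0 ∉ I) (hne : I.Nonempty)
    (n : ℕ) (hn : I.sup id < n) :
    dA I (n + 1) =
      dA I n
      + ∑ j ∈ ((I.filter fun j => j - 1 ∉ I).erase 1),
          dA ((I.image fun x => if x < j then x else x - 1).erase 0) n
      + ∑ j ∈ (I.filter fun j => j - 1 ∉ I),
          dA ((I.erase j).image fun x => if x < j then x else x - 1) n :=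
  stmt_3_general I h0 n hn
end

section
/- Let I = {ℓ, m} with 1 ≤ ℓ < m. Then d(I;z) = (1/m!)·(C(m,ℓ) − 1)·z(z−1)⋯(z−m+1) − (1/ℓ!)·z(z−1)⋯(z−ℓ+1) + 1, and every root z₀ ∈ ℂ of d(I;z) satisfies |z₀ − k| ≤ m for some k ∈ {0,1,…,m−1}; in particular |z₀| ≤ 2m−1, Re(z₀) ≥ −m, and |Im(z₀)| ≤ m. -/
open Finset Polynomial
open Equiv (Perm)

section FiberIncreasing

variable {n : ℕ} {ι : Type*} [LinearOrder ι] {L : Fin n → ι}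

lemma comp_comp_sort_eq_of_monotone (hL : Monotone L) (σ : Perm (Fin n)) :
    L ∘ σ ∘ Tuple.sort (L ∘ σ) = L := by
  have h := Tuple.comp_perm_comp_sort_eq_comp_sort (f := L) (σ := σ)
  rwa [Tuple.sort_eq_refl_iff_monotone.mpr hL] at h

lemma eq_sort_comp_symm_iff (hL : Monotone L) (π : Perm (Fin n)) :
    π = Tuple.sort (L ∘ π.symm) ↔ ∀ i j, i < j → L i = L j → π i < π j := by
  simp [Tuple.eq_sort_iff, Function.comp_def, hL]

lemma comp_eq_comp_of_sort_comp_eq (hL : Monotone L) {σ τ : Perm (Fin n)}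
    (h : Tuple.sort (L ∘ σ) = Tuple.sort (L ∘ τ)) : L ∘ σ = L ∘ τ := by
  have hσ := comp_comp_sort_eq_of_monotone hL σ
  have hτ := comp_comp_sort_eq_of_monotone hL τ
  rw [h] at hσ
  set s := Tuple.sort (L ∘ τ)
  calc L ∘ σ = (L ∘ σ ∘ s) ∘ s.symm := by ext; simp
    _ = (L ∘ τ ∘ s) ∘ s.symm := by rw [hσ, hτ]
    _ = L ∘ τ := by ext; simp

theorem card_fiberIncreasing_mul_card_stabilizer (hL : Monotone L) :
    #{π : Perm (Fin n) | ∀ i j, i < j → L i = L j → π i < π j} *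
      Fintype.card {g : Perm (Fin n) // L ∘ g = L} = n.factorial := by
  set B : Finset (Perm (Fin n)) := {π | ∀ i j, i < j → L i = L j → π i < π j}
  have hB : ∀ π, π ∈ B ↔ π = Tuple.sort (L ∘ π.symm) := by
    simp [B, eq_sort_comp_symm_iff hL]
  have hmaps : ∀ σ : Perm (Fin n), Tuple.sort (L ∘ σ) ∈ B := by
    intro σ
    rw [hB]
    congr 1
    have h := comp_comp_sort_eq_of_monotone hL σ
    ext x
    simpa using congrFun h ((Tuple.sort (L ∘ σ)).symm x)
  have hfiber : ∀ π ∈ B, #{σ : Perm (Fin n) | Tuple.sort (L ∘ σ) = π} =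
      Fintype.card {g : Perm (Fin n) // L ∘ g = L} := by
    intro π hπ
    rw [Fintype.card_subtype]
    refine card_equiv (Equiv.mulRight π) fun σ => ?_
    simp only [mem_filter, mem_univ, true_and, Equiv.coe_mulRight]
    nth_rewrite 1 [(hB π).1 hπ]
    constructor
    · intro h
      have := comp_eq_comp_of_sort_comp_eq hL h
      ext x
      simpa using congrFun this (π x)
    · intro h
      congr 1
      ext x
      simpa using congrFun h (π.symm x)
  calc #B * Fintype.card {g : Perm (Fin n) // L ∘ g = L}
      = ∑ π ∈ B, #{σ : Perm (Fin n) | Tuple.sort (L ∘ σ) = π} := by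
        rw [sum_congr rfl hfiber, sum_const, smul_eq_mul]
    _ = #(univ : Finset (Perm (Fin n))) :=
        (card_eq_sum_card_fiberwise fun σ _ => hmaps σ).symm
    _ = n.factorial := by simp [Fintype.card_perm]

lemma fiberIncreasing_iff_adjacent {β : Type*} [Preorder β] (hL : Monotone L) (f : Fin n → β) :
    (∀ i j, i < j → L i = L j → f i < f j) ↔
      ∀ i (h : i + 1 < n), L ⟨i, by omega⟩ = L ⟨i + 1, h⟩ → f ⟨i, by omega⟩ < f ⟨i + 1, h⟩ := by
  refine ⟨fun H i h hL' => H _ _ (by simp [Fin.lt_def]) hL', fun H i j hij hLij => ?_⟩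
  obtain ⟨j, hj⟩ := j
  induction j with
  | zero => exact absurd hij (by simp [Fin.lt_def])
  | succ k ih =>
    have hik : i ≤ ⟨k, by omega⟩ := by simp [Fin.le_def, Fin.lt_def] at hij ⊢; omega
    have hLi : L i = L ⟨k, by omega⟩ :=
      le_antisymm (hL hik) (hLij ▸ hL (by simp [Fin.le_def]))
    have hstep := H k hj (hLi.symm.trans hLij)
    rcases hik.lt_or_eq with hlt | heq
    · exact (ih (by omega) hlt hLi).trans hstep
    · rwa [heq]

end FiberIncreasing

lemma descSet_subset_iff {n : ℕ} (π : Perm (Fin n)) (S : Finset ℕ) :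
    descSet n π ⊆ S ↔
      ∀ i (h : i + 1 < n), i + 1 ∉ S → π ⟨i, by omega⟩ < π ⟨i + 1, h⟩ := by
  simp only [subset_iff, descSet, mem_filter, mem_range]
  constructor
  · intro H i h hS
    refine lt_of_le_of_ne (not_lt.mp fun hlt => hS (H ⟨h, ⟨by omega, h⟩, hlt⟩)) ?_
    simp [Fin.ext_iff]
  · rintro H i ⟨-, ⟨hi0, hin⟩, hlt⟩
    by_contra hS
    obtain ⟨k, rfl⟩ : ∃ k, i = k + 1 := ⟨i - 1, by omega⟩
    exact (H k hin hS).not_gt hlt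

lemma zero_notMem_descSet {n : ℕ} (π : Perm (Fin n)) : 0 ∉ descSet n π := by
  simp [descSet]

def blockIndex (a b i : ℕ) : Fin 3 :=
  ⟨(if a ≤ i then 1 else 0) + if b ≤ i then 1 else 0, by split_ifs <;> omega⟩

lemma blockIndex_monotone (a b : ℕ) : Monotone (blockIndex a b) := by
  intro i j hij
  simp only [blockIndex, Fin.mk_le_mk]
  split_ifs <;> omega

lemma blockIndex_eq_blockIndex_succ_iff {a b i : ℕ} :
    blockIndex a b i = blockIndex a b (i + 1) ↔ i + 1 ∉ ({a, b} : Finset ℕ) := by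
  simp only [blockIndex, Fin.mk.injEq, mem_insert, mem_singleton]
  split_ifs <;> omega

lemma descSet_subset_pair_iff {n : ℕ} (a b : ℕ) (π : Perm (Fin n)) :
    descSet n π ⊆ {a, b} ↔
      ∀ i j : Fin n, i < j → blockIndex a b i = blockIndex a b j → π i < π j := by
  rw [descSet_subset_iff, fiberIncreasing_iff_adjacent (L := fun i : Fin n => blockIndex a b i)
    ((blockIndex_monotone a b).comp Fin.val_strictMono.monotone)]
  simp only [blockIndex_eq_blockIndex_succ_iff]

lemma card_filter_le_val_and_val_lt {n lo hi : ℕ} (h : hi ≤ n) :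
    #{i : Fin n | lo ≤ (i : ℕ) ∧ (i : ℕ) < hi} = hi - lo := by
  rw [← Nat.card_Ico, ← card_map Fin.valEmbedding]
  congr 1
  ext x
  simp only [mem_map, mem_filter, mem_univ, true_and, Fin.valEmbedding_apply, mem_Ico]
  exact ⟨by rintro ⟨i, hi, rfl⟩; exact hi, fun hx => ⟨⟨x, by omega⟩, hx, rfl⟩⟩

lemma card_stabilizer_blockIndex {n a b : ℕ} (hab : a ≤ b) (hbn : b ≤ n) :
    Fintype.card {g : Perm (Fin n) //
        (blockIndex a b ∘ Fin.val) ∘ g = blockIndex a b ∘ Fin.val} =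
      a.factorial * (b - a).factorial * (n - b).factorial := by
  have hfiber : ∀ (v : Fin 3) (lo hi : ℕ), hi ≤ n →
      (∀ i : ℕ, i < n → (blockIndex a b i = v ↔ lo ≤ i ∧ i < hi)) →
      Fintype.card {i : Fin n // (blockIndex a b ∘ Fin.val) i = v} = hi - lo := by
    intro v lo hi hhi hv
    rw [Fintype.card_subtype, ← card_filter_le_val_and_val_lt hhi]
    congr 1
    ext i
    simpa using hv i i.isLt
  rw [DomMulAct.stabilizer_card, Fin.prod_univ_three,
    hfiber 0 0 a (by omega) fun i _ => ?_, hfiber 1 a b hbn fun i _ => ?_,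
    hfiber 2 b n le_rfl fun i hi => ?_, Nat.sub_zero] <;>
  simp only [blockIndex, Fin.ext_iff] <;> split_ifs <;> simp <;> omega

theorem card_descSet_subset_pair {n a b : ℕ} (hab : a ≤ b) (hbn : b ≤ n) :
    #{π : Perm (Fin n) | descSet n π ⊆ {a, b}} = n.choose a * (n - a).choose (b - a) := by
  have hcount := card_fiberIncreasing_mul_card_stabilizer
    ((blockIndex_monotone a b).comp (Fin.val_strictMono (n := n)).monotone)
  simp only [Function.comp_apply] at hcount
  rw [card_stabilizer_blockIndex hab hbn] at hcount
  simp_rw [descSet_subset_pair_iff]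
  have hchoose : n.choose a * (n - a).choose (b - a) *
      (a.factorial * (b - a).factorial * (n - b).factorial) = n.factorial := by
    rw [← Nat.choose_mul_factorial_mul_factorial (show a ≤ n by omega),
      ← Nat.choose_mul_factorial_mul_factorial (show b - a ≤ n - a by omega),
      show n - a - (b - a) = n - b by omega]
    ring
  exact Nat.eq_of_mul_eq_mul_right (by positivity) (hcount.trans hchoose.symm)

lemma card_descSet_subset_eq_sum {n : ℕ} (S : Finset ℕ) :
    #{π : Perm (Fin n) | descSet n π ⊆ S} = ∑ J ∈ S.powerset, dA J n := by
  rw [card_eq_sum_card_fiberwise (f := descSet n) (t := S.powerset)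
    fun π hπ => by simpa using hπ]
  refine sum_congr rfl fun J hJ => ?_
  rw [dA, filter_filter]
  congr 1
  exact filter_congr fun π _ => ⟨And.right, fun h => ⟨h ▸ mem_powerset.mp hJ, h⟩⟩

lemma dA_empty_add_dA_singleton {n c : ℕ} (hc : c ≤ n) : dA ∅ n + dA {c} n = n.choose c := by
  have h := card_descSet_subset_pair (le_refl c) hc
  rw [pair_eq_singleton, card_descSet_subset_eq_sum, ← insert_empty,
    sum_powerset_insert (notMem_empty c)] at h
  simpa using h

lemma dA_empty (n : ℕ) : dA ∅ n = 1 := by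
  have h := card_descSet_subset_pair (le_refl 0) (Nat.zero_le n)
  have hzero : ∀ π : Perm (Fin n), descSet n π ⊆ {0, 0} ↔ descSet n π ⊆ ∅ := fun π => by
    rw [pair_eq_singleton]
    exact ⟨fun h x hx => (zero_notMem_descSet π (mem_singleton.mp (h hx) ▸ hx)).elim,
      fun h => h.trans (empty_subset _)⟩
  simp only [hzero, card_descSet_subset_eq_sum, powerset_empty, sum_singleton] at h
  simpa using h

theorem dA_pair_add_choose_add_choose {ℓ m n : ℕ} (hℓm : ℓ < m) (hmn : m ≤ n) :
    dA {ℓ, m} n + n.choose ℓ + n.choose m = n.choose m * m.choose ℓ + 1 := by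
  have h := card_descSet_subset_pair hℓm.le hmn
  rw [card_descSet_subset_eq_sum, sum_powerset_insert (by simpa using hℓm.ne), ← insert_empty,
    sum_powerset_insert (notMem_empty m), sum_powerset_insert (notMem_empty m)] at h
  simp only [powerset_empty, sum_singleton, insert_empty] at h
  have hℓ := dA_empty_add_dA_singleton (hℓm.le.trans hmn)
  have hm := dA_empty_add_dA_singleton hmn
  have h0 := dA_empty n
  rw [Nat.choose_mul hℓm.le]
  omega

section DescentPolynomial

variable (K : Type*) [Field K]

noncomputable def pairDescentPoly (ℓ m : ℕ) : K[X] :=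
  C (1 / (m.factorial : K) * ((m.choose ℓ : K) - 1)) * descPochhammer K m
    - C (1 / (ℓ.factorial : K)) * descPochhammer K ℓ + 1

variable {K}

lemma eval_pairDescentPoly (ℓ m : ℕ) (z : K) :
    (pairDescentPoly K ℓ m).eval z =
      1 / (m.factorial : K) * ((m.choose ℓ : K) - 1) * ∏ j ∈ range m, (z - j)
        - 1 / (ℓ.factorial : K) * ∏ j ∈ range ℓ, (z - j) + 1 := by
  simp [pairDescentPoly, descPochhammer_eval_eq_prod_range]

lemma eval_natCast_pairDescentPoly [CharZero K] {ℓ m n : ℕ} (hℓm : ℓ < m) (hmn : m ≤ n) :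
    (pairDescentPoly K ℓ m).eval (n : K) = dA {ℓ, m} n := by
  have hcount : (dA {ℓ, m} n : K) + n.choose ℓ + n.choose m = n.choose m * m.choose ℓ + 1 := by
    exact_mod_cast dA_pair_add_choose_add_choose hℓm hmn
  simp only [pairDescentPoly, eval_add, eval_sub, eval_mul, eval_C, eval_one,
    descPochhammer_eval_eq_descFactorial, Nat.descFactorial_eq_factorial_mul_choose, Nat.cast_mul]
  have hm : (m.factorial : K) ≠ 0 := Nat.cast_ne_zero.mpr m.factorial_ne_zero
  have hℓ : (ℓ.factorial : K) ≠ 0 := Nat.cast_ne_zero.mpr ℓ.factorial_ne_zero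
  field_simp
  linear_combination -hcount

theorem eq_pairDescentPoly [CharZero K] {ℓ m : ℕ} (hℓm : ℓ < m) {p : K[X]}
    (hp : ∀ n : ℕ, m < n → p.eval (n : K) = dA {ℓ, m} n) : p = pairDescentPoly K ℓ m := by
  refine eq_of_infinite_eval_eq _ _ (Set.infinite_of_injective_forall_mem
    (f := fun k : ℕ => ((m + 1 + k : ℕ) : K)) (fun i j h => by simpa using h) fun k => ?_)
  rw [Set.mem_ofPred_eq, hp _ (by omega), eval_natCast_pairDescentPoly hℓm (by omega)]

end DescentPolynomial

theorem Nat.le_choose_of_pos_of_lt {n k : ℕ} (hk : 0 < k) (hkn : k < n) : n ≤ n.choose k := by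
  induction n generalizing k with
  | zero => omega
  | succ n ih =>
    obtain ⟨k, rfl⟩ : ∃ k', k = k' + 1 := ⟨k - 1, by omega⟩
    rw [Nat.choose_succ_succ']
    rcases Nat.eq_zero_or_pos k with rfl | hk0
    · simp [add_comm]
    · have := ih hk0 (by omega)
      have : 0 < n.choose (k + 1) := Nat.choose_pos (by omega)
      omega

section NormProd

variable {𝕜 : Type*} [NormedField 𝕜] {z : 𝕜}

lemma factorial_lt_norm_prod_sub {k : ℕ} (hk : 0 < k) (hz : ∀ j < k, (j + 1 : ℝ) < ‖z - j‖) :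
    (k.factorial : ℝ) < ‖∏ j ∈ range k, (z - j)‖ := by
  rw [← prod_range_add_one_eq_factorial, norm_prod]
  push_cast
  exact prod_lt_prod_of_nonempty (fun j _ => by positivity) (fun j hj => hz j (mem_range.mp hj))
    (nonempty_range_iff.mpr hk.ne')

lemma factorial_mul_norm_prod_sub_le {k m : ℕ} (hkm : k ≤ m)
    (hz : ∀ j ∈ Ico k m, (j + 1 : ℝ) ≤ ‖z - j‖) :
    (m.factorial : ℝ) * ‖∏ j ∈ range k, (z - j)‖ ≤ k.factorial * ‖∏ j ∈ range m, (z - j)‖ := by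
  rw [← prod_range_mul_prod_Ico _ hkm, ← prod_range_add_one_eq_factorial,
    ← prod_range_add_one_eq_factorial, ← prod_range_mul_prod_Ico _ hkm, norm_mul, norm_prod,
    norm_prod (Ico k m)]
  push_cast
  calc (∏ j ∈ range k, ((j : ℝ) + 1)) * (∏ j ∈ Ico k m, ((j : ℝ) + 1)) * ∏ j ∈ range k, ‖z - j‖
      = (∏ j ∈ range k, ((j : ℝ) + 1)) *
          ((∏ j ∈ range k, ‖z - j‖) * ∏ j ∈ Ico k m, ((j : ℝ) + 1)) := by ring
    _ ≤ (∏ j ∈ range k, ((j : ℝ) + 1)) * ((∏ j ∈ range k, ‖z - j‖) * ∏ j ∈ Ico k m, ‖z - j‖) := by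
      gcongr with j hj
      exact hz j hj

end NormProd

lemma eval_pairDescentPoly_one_two {K : Type*} [Field K] [CharZero K] (z : K) :
    (pairDescentPoly K 1 2).eval z = (z - 1) * (z - 2) / 2 := by
  rw [eval_pairDescentPoly]
  norm_num [prod_range_succ]
  ring

lemma eval_pairDescentPoly_ne_zero {ℓ m : ℕ} (hℓ : 0 < ℓ) (hℓm : ℓ ≤ m)
    (hchoose : 3 ≤ m.choose ℓ) {z : ℂ} (hz : ∀ j < m, (j + 1 : ℝ) < ‖z - j‖) :
    (pairDescentPoly ℂ ℓ m).eval z ≠ 0 := by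
  intro hroot
  obtain ⟨c, hc⟩ : ∃ c, m.choose ℓ = c + 1 := ⟨m.choose ℓ - 1, by omega⟩
  rw [eval_pairDescentPoly, hc] at hroot
  push_cast at hroot
  set w := ‖∏ j ∈ range ℓ, (z - j)‖ / ℓ.factorial
  set v := ‖∏ j ∈ range m, (z - j)‖ / m.factorial
  have hw : 1 < w := (one_lt_div (by positivity)).mpr
    (factorial_lt_norm_prod_sub hℓ fun j hj => hz j (by omega))
  have hwv : w ≤ v := by
    rw [div_le_div_iff₀ (by positivity) (by positivity)]
    linarith [factorial_mul_norm_prod_sub_le hℓm fun j hj => (hz j (mem_Ico.mp hj).2).le]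
  have hcv : c * v ≤ w + 1 :=
    calc c * v = ‖1 / (m.factorial : ℂ) * c * ∏ j ∈ range m, (z - j)‖ := by
          simp [v, div_eq_inv_mul]; ring
      _ = ‖1 / (ℓ.factorial : ℂ) * ∏ j ∈ range ℓ, (z - j) - 1‖ := by
          congr 1; linear_combination hroot
      _ ≤ ‖1 / (ℓ.factorial : ℂ) * ∏ j ∈ range ℓ, (z - j)‖ + ‖(1 : ℂ)‖ := norm_sub_le _ _
      _ = w + 1 := by simp [w, div_eq_inv_mul]
  have hc2 : (2 : ℝ) ≤ c := by exact_mod_cast (show 2 ≤ c by omega)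
  nlinarith

theorem exists_norm_sub_natCast_le_of_eval_pairDescentPoly_eq_zero {ℓ m : ℕ} (hℓ : 1 ≤ ℓ)
    (hℓm : ℓ < m) {z : ℂ} (hz : (pairDescentPoly ℂ ℓ m).eval z = 0) :
    ∃ k ∈ range m, ‖z - k‖ ≤ m := by
  by_contra! hfar
  obtain rfl | hm3 : m = 2 ∨ 3 ≤ m := by omega
  · obtain rfl : ℓ = 1 := by omega
    rw [eval_pairDescentPoly_one_two, div_eq_zero_iff, mul_eq_zero, sub_eq_zero, sub_eq_zero] at hz
    rcases hz with (rfl | rfl) | h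
    · exact absurd (hfar 1 (by simp)) (by norm_num)
    · exact absurd (hfar 0 (by simp)) (by norm_num)
    · norm_num at h
  · refine eval_pairDescentPoly_ne_zero hℓ hℓm.le (hm3.trans (Nat.le_choose_of_pos_of_lt hℓ hℓm))
      (fun j hj => ?_) hz
    exact lt_of_le_of_lt (by exact_mod_cast hj) (hfar j (mem_range.mpr hj))

/-- Theorem 4.8: for `I = {ℓ, m}` with `1 ≤ ℓ < m`, the descent polynomial is
`(1/m!)(C(m,ℓ)−1) z↓_m − (1/ℓ!) z↓_ℓ + 1`, and every root lies in a disc of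
radius `m` centered at some `k ∈ {0,…,m−1}`; in particular `|z₀| ≤ 2m−1`,
`Re(z₀) ≥ −m` and `|Im(z₀)| ≤ m`. -/
theorem stmt_15 (ℓ m : ℕ) (h1 : 1 ≤ ℓ) (h2 : ℓ < m)
    (p : Polynomial ℂ)
    (hp : ∀ n : ℕ, m < n → p.eval (n : ℂ) = dA {ℓ, m} n) :
    (∀ z : ℂ,
      p.eval z = (1 / (m.factorial : ℂ)) * ((m.choose ℓ : ℂ) - 1) *
          (∏ j ∈ Finset.range m, (z - j))
        - (1 / (ℓ.factorial : ℂ)) * (∏ j ∈ Finset.range ℓ, (z - j)) + 1) ∧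
    (∀ z₀ : ℂ, p.eval z₀ = 0 →
      (∃ k ∈ Finset.range m, ‖z₀ - k‖ ≤ m) ∧
      ‖z₀‖ ≤ 2 * m - 1 ∧ -(m : ℝ) ≤ z₀.re ∧ |z₀.im| ≤ m) := by
  have hpoly := eq_pairDescentPoly h2 hp
  refine ⟨fun z => by rw [hpoly, eval_pairDescentPoly], fun z₀ hz₀ => ?_⟩
  obtain ⟨k, hk, hdist⟩ :=
    exists_norm_sub_natCast_le_of_eval_pairDescentPoly_eq_zero h1 h2 (hpoly ▸ hz₀)
  have hkm : (k : ℝ) + 1 ≤ m := by exact_mod_cast mem_range.mp hk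
  refine ⟨⟨k, hk, hdist⟩, ?_, ?_, ?_⟩
  · have := norm_sub_norm_le z₀ k
    rw [Complex.norm_natCast] at this
    linarith
  · have hre := (Complex.abs_re_le_norm (z₀ - k)).trans hdist
    rw [Complex.sub_re, Complex.natCast_re] at hre
    linarith [neg_abs_le (z₀.re - k), (k.cast_nonneg : (0 : ℝ) ≤ k)]
  · simpa using (Complex.abs_im_le_norm (z₀ - k)).trans hdist
end
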